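/- Let 0 < q < 1. There exists a constant c₂ > 0 such that the truncated geometric prior π_n(κ) = (1−q)q^κ/(1−q^{n+1}) satisfies π_n(κ) ≥ (κ/n)^{c₂ κ} for all n sufficiently large and all 1 ≤ κ ≤ e^{−9/2}·n. -/
import Mathlib


theorem truncated_geometric_prior_bound (q : ℝ) (hq0 : 0 < q) (hq1 : q < 1) :
    ∃ c₂ : ℝ, 0 < c₂ ∧ ∃ N : ℕ, ∀ n : ℕ, N ≤ n → ∀ κ : ℕ, 1 ≤ κ →
      (κ : ℝ) ≤ Real.exp (-(9 / 2 : ℝ)) * n →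
      (1 - q) * q ^ κ / (1 - q ^ (n + 1)) ≥ ((κ : ℝ) / n) ^ (c₂ * κ) := by
  have hq' : 0 < 1 - q := by linarith
  have hprod : 0 < q * (1 - q) := mul_pos hq0 hq'
  have hprod1 : q * (1 - q) < 1 := by nlinarith
  have hlog : Real.log (q * (1 - q)) < 0 := Real.log_neg hprod hprod1
  refine ⟨-(2 / 9) * Real.log (q * (1 - q)), by nlinarith, 1, ?_⟩
  intro n hn κ hκ hκn
  have hn0 : (0 : ℝ) < n := by exact_mod_cast Nat.lt_of_lt_of_le Nat.zero_lt_one hn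
  have hκ0 : (0 : ℝ) < κ := by exact_mod_cast hκ
  have hx0 : (0 : ℝ) ≤ (κ : ℝ) / n := le_of_lt (div_pos hκ0 hn0)
  have hxle : (κ : ℝ) / n ≤ Real.exp (-(9 / 2 : ℝ)) := by
    rw [div_le_iff₀ hn0]; exact hκn
  have hexp0 : (0 : ℝ) ≤ -(2 / 9) * Real.log (q * (1 - q)) * κ := by
    apply mul_nonneg _ (le_of_lt hκ0); nlinarith
  have h1 : ((κ : ℝ) / n) ^ (-(2 / 9) * Real.log (q * (1 - q)) * κ)
      ≤ (Real.exp (-(9 / 2 : ℝ))) ^ (-(2 / 9) * Real.log (q * (1 - q)) * κ) :=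
    Real.rpow_le_rpow hx0 hxle hexp0
  have h2 : (Real.exp (-(9 / 2 : ℝ))) ^ (-(2 / 9) * Real.log (q * (1 - q)) * κ)
      = (q * (1 - q)) ^ κ := by
    rw [← Real.exp_mul]
    have : -(9 / 2 : ℝ) * (-(2 / 9) * Real.log (q * (1 - q)) * κ)
        = (κ : ℕ) * Real.log (q * (1 - q)) := by push_cast; ring
    rw [this, Real.exp_nat_mul, Real.exp_log hprod]
  have h3 : (q * (1 - q)) ^ κ ≤ (1 - q) * q ^ κ := by
    rw [mul_pow]
    calc q ^ κ * (1 - q) ^ κ ≤ q ^ κ * (1 - q) ^ 1 := by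
          apply mul_le_mul_of_nonneg_left _ (le_of_lt (pow_pos hq0 κ))
          exact pow_le_pow_of_le_one (le_of_lt hq') (by linarith) hκ
      _ = (1 - q) * q ^ κ := by ring
  have hd : 0 < 1 - q ^ (n + 1) := by
    have : q ^ (n + 1) < 1 := pow_lt_one₀ (le_of_lt hq0) hq1 (Nat.succ_ne_zero n)
    linarith
  have hd1 : 1 - q ^ (n + 1) ≤ 1 := by
    have : 0 ≤ q ^ (n + 1) := pow_nonneg (le_of_lt hq0) _
    linarith
  have h4 : (1 - q) * q ^ κ ≤ (1 - q) * q ^ κ / (1 - q ^ (n + 1)) := by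
    rw [le_div_iff₀ hd]
    have hA : 0 ≤ (1 - q) * q ^ κ :=
      mul_nonneg (le_of_lt hq') (pow_nonneg (le_of_lt hq0) _)
    nlinarith
  calc ((κ : ℝ) / n) ^ (-(2 / 9) * Real.log (q * (1 - q)) * κ)
      ≤ (q * (1 - q)) ^ κ := h2 ▸ h1
    _ ≤ (1 - q) * q ^ κ := h3
    _ ≤ (1 - q) * q ^ κ / (1 - q ^ (n + 1)) := h4
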